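/- arXiv:1709.01173 — 3 statements merged into one kernel-verified Lean document; each statement's English description precedes it below -/
import Mathlib

section
/- If H is an n-vertex r-uniform hypergraph with no tight path with k edges (a sequence of k+r-1 distinct vertices v_0,...,v_{k+r-2} such that every r consecutive vertices form an edge), then H has at most (k-1)·C(n, r-1) edges. -/
open Finset

/-- Auxiliary: a tight path with `k` edges, phrased with `Fin (s + k)` where `s = r - 1`. -/
def TPaux {α : Type*} [DecidableEq α] (s k : ℕ) (H : Finset (Finset α)) : Prop :=
  ∃ w : Fin (s + k) → α, Function.Injective w ∧
    ∀ i : Fin k, (Finset.image (fun t : Fin (s + 1) =>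
      w ⟨i.val + t.val, by have := i.isLt; have := t.isLt; omega⟩) Finset.univ) ∈ H

lemma tp_one {α : Type*} [DecidableEq α] (s : ℕ) (H : Finset (Finset α))
    (hcard : ∀ e ∈ H, e.card = s + 1) (hne : H.Nonempty) : TPaux s 1 H := by
  obtain ⟨e, he⟩ := hne
  have hc : e.card = s + 1 := hcard e he
  refine ⟨fun t => (e.equivFin.symm (Fin.cast hc.symm t) : α), ?_, ?_⟩
  · intro a b hab
    have := e.equivFin.symm.injective (Subtype.val_injective hab)
    exact Fin.cast_injective _ this
  · intro i
    have himg : Finset.image (fun t : Fin (s + 1) =>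
        ((e.equivFin.symm (Fin.cast hc.symm t) : α))) Finset.univ = e := by
      ext a
      simp only [mem_image, mem_univ, true_and]
      constructor
      · rintro ⟨t, rfl⟩; exact (e.equivFin.symm _).2
      · intro ha
        refine ⟨Fin.cast hc (e.equivFin ⟨a, ha⟩), ?_⟩
        simp
    have : (fun t : Fin (s + 1) => (e.equivFin.symm (Fin.cast hc.symm
        (⟨i.val + t.val, by have := i.isLt; have := t.isLt; omega⟩ : Fin (s+1))) : α))
        = (fun t : Fin (s + 1) => (e.equivFin.symm (Fin.cast hc.symm t) : α)) := by
      funext t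
      congr 1
      simp [Fin.ext_iff]
    rw [this, himg]
    exact he

lemma tp_step {α : Type*} [Fintype α] [DecidableEq α] (s k j : ℕ) (H : Finset (Finset α))
    (hcard : ∀ e ∈ H, e.card = s + 1)
    (hdeg : ∀ S : Finset α, S.card = s → (∃ e ∈ H, S ⊆ e) →
      k ≤ (H.filter (fun e => S ⊆ e)).card)
    (hj : 1 ≤ j) (hjk : j + 1 ≤ k) (htp : TPaux s j H) : TPaux s (j + 1) H := by
  obtain ⟨w, hinj, hedge⟩ := htp
  set S : Finset α := Finset.image (fun t : Fin s => w ⟨j + t.val, by omega⟩) Finset.univ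
    with hSdef
  have hwinj : ∀ a b : Fin (s + j), w a = w b → a = b := fun a b h => hinj h
  have hScard : S.card = s := by
    rw [hSdef, Finset.card_image_of_injective, card_univ, Fintype.card_fin]
    intro a b hab
    have := hwinj _ _ hab
    simp [Fin.ext_iff] at this ⊢
    omega
  -- S is contained in the last edge
  have hlast := hedge ⟨j - 1, by omega⟩
  have hSsub : S ⊆ Finset.image (fun t : Fin (s + 1) =>
      w ⟨j - 1 + t.val, by have := t.isLt; omega⟩) Finset.univ := by
    intro a ha
    rw [hSdef] at ha
    simp only [mem_image, mem_univ, true_and] at ha ⊢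
    obtain ⟨t, rfl⟩ := ha
    refine ⟨⟨t.val + 1, by have := t.isLt; omega⟩, ?_⟩
    congr 1
    simp [Fin.ext_iff]
    omega
  have hdegS := hdeg S hScard ⟨_, hlast, hSsub⟩
  set F := H.filter (fun e => S ⊆ e) with hFdef
  set V : Finset α := Finset.image w Finset.univ with hVdef
  have hVcard : V.card = s + j := by
    rw [hVdef, Finset.card_image_of_injective _ hinj, card_univ, Fintype.card_fin]
  have hSV : S ⊆ V := by
    rw [hSdef, hVdef]
    intro a ha
    simp only [mem_image, mem_univ, true_and] at ha ⊢
    obtain ⟨t, rfl⟩ := ha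
    exact ⟨_, rfl⟩
  -- find an edge extending S outside V
  have hexists : ∃ e ∈ F, ∃ x, x ∈ e ∧ x ∉ V := by
    by_contra hcon
    push_neg at hcon
    have hFsub : F ⊆ (V \ S).image (fun x => insert x S) := by
      intro e heF
      have he : e ∈ H := (mem_filter.mp heF).1
      have hSe : S ⊆ e := (mem_filter.mp heF).2
      have hec : e.card = s + 1 := hcard e he
      have hsd : (e \ S).card = 1 := by
        rw [Finset.card_sdiff_of_subset hSe, hec, hScard]
        omega
      obtain ⟨x, hx⟩ := Finset.card_eq_one.mp hsd
      have hxe : x ∈ e ∧ x ∉ S := by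
        have : x ∈ e \ S := hx ▸ Finset.mem_singleton_self x
        exact ⟨(Finset.mem_sdiff.mp this).1, (Finset.mem_sdiff.mp this).2⟩
      have hins : insert x S = e := by
        apply Finset.eq_of_subset_of_card_le
        · intro a ha
          rcases Finset.mem_insert.mp ha with rfl | ha
          · exact hxe.1
          · exact hSe ha
        · rw [hec, Finset.card_insert_of_notMem hxe.2, hScard]
      simp only [mem_image]
      exact ⟨x, Finset.mem_sdiff.mpr ⟨hcon e heF x hxe.1, hxe.2⟩, hins⟩
    have h1 : F.card ≤ (V \ S).card := le_trans (Finset.card_le_card hFsub)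
      Finset.card_image_le
    rw [Finset.card_sdiff_of_subset hSV, hVcard, hScard] at h1
    omega
  obtain ⟨e, heF, x, hxe, hxV⟩ := hexists
  have he : e ∈ H := (mem_filter.mp heF).1
  have hSe : S ⊆ e := (mem_filter.mp heF).2
  have hxS : x ∉ S := fun h => hxV (hSV h)
  have hex : insert x S = e := by
    apply Finset.eq_of_subset_of_card_le
    · intro a ha
      rcases Finset.mem_insert.mp ha with rfl | ha
      · exact hxe
      · exact hSe ha
    · rw [hcard e he, Finset.card_insert_of_notMem hxS, hScard]
  -- extend the path
  have hmemV : ∀ (c : ℕ) (h : c < s + j), w ⟨c, h⟩ ∈ V := by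
    intro c h
    rw [hVdef]
    simp only [mem_image, mem_univ, true_and]
    exact ⟨_, rfl⟩
  refine ⟨fun i => if h : i.val < s + j then w ⟨i.val, h⟩ else x, ?_, ?_⟩
  · intro a b hab
    simp only at hab
    split_ifs at hab with h1 h2 h2
    · have := hwinj _ _ hab
      simp [Fin.ext_iff] at this ⊢
      exact this
    · exact absurd (hab ▸ hmemV a.val h1) hxV
    · exact absurd (hab.symm ▸ hmemV b.val h2) hxV
    · have ha := a.isLt; have hb := b.isLt
      exact Fin.ext (by omega)
  · intro i
    show Finset.image (fun t : Fin (s + 1) =>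
        if h : i.val + t.val < s + j then w ⟨i.val + t.val, h⟩ else x) Finset.univ ∈ H
    by_cases hij : i.val < j
    · have hold := hedge ⟨i.val, hij⟩
      have heq : Finset.image (fun t : Fin (s + 1) =>
          if h : (i.val + t.val) < s + j then w ⟨i.val + t.val, h⟩ else x) Finset.univ
          = Finset.image (fun t : Fin (s + 1) =>
          w ⟨i.val + t.val, by have := t.isLt; omega⟩) Finset.univ := by
        apply Finset.image_congr
        intro t _
        dsimp only
        rw [dif_pos (show i.val + t.val < s + j by have := t.isLt; omega)]
      rw [heq]
      exact hold
    · have hij' : i.val = j := by have := i.isLt; omega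
      have himg : Finset.image (fun t : Fin (s + 1) =>
          if h : (i.val + t.val) < s + j then w ⟨i.val + t.val, h⟩ else x) Finset.univ
          = insert x S := by
        ext a
        simp only [mem_image, mem_univ, true_and, Finset.mem_insert]
        constructor
        · rintro ⟨t, rfl⟩
          by_cases ht : t.val < s
          · right
            rw [dif_pos (show i.val + t.val < s + j by omega), hSdef]
            simp only [mem_image, mem_univ, true_and]
            refine ⟨⟨t.val, ht⟩, ?_⟩
            congr 1
            simp [Fin.ext_iff]
            omega
          · left
            rw [dif_neg (show ¬ (i.val + t.val < s + j) by have := t.isLt; omega)]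
        · rintro (rfl | ha)
          · refine ⟨⟨s, Nat.lt_succ_self s⟩, ?_⟩
            dsimp only
            rw [dif_neg (show ¬ (i.val + s < s + j) by omega)]
          · rw [hSdef] at ha
            simp only [mem_image, mem_univ, true_and] at ha
            obtain ⟨t, rfl⟩ := ha
            refine ⟨⟨t.val, by have := t.isLt; omega⟩, ?_⟩
            dsimp only
            rw [dif_pos (show i.val + t.val < s + j by have := t.isLt; omega)]
            congr 1
            simp [Fin.ext_iff]
            omega
      rw [himg, hex]
      exact he

lemma tp_greedy {α : Type*} [Fintype α] [DecidableEq α] (s k : ℕ) (H : Finset (Finset α))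
    (hcard : ∀ e ∈ H, e.card = s + 1)
    (hdeg : ∀ S : Finset α, S.card = s → (∃ e ∈ H, S ⊆ e) →
      k ≤ (H.filter (fun e => S ⊆ e)).card)
    (hne : H.Nonempty) (hk : 1 ≤ k) : TPaux s k H := by
  have key : ∀ j, 1 ≤ j → j ≤ k → TPaux s j H := by
    intro j
    induction j with
    | zero => omega
    | succ j ih =>
      intro _ hjk
      rcases Nat.eq_zero_or_pos j with rfl | hj
      · exact tp_one s H hcard hne
      · exact tp_step s k j H hcard hdeg hj hjk (ih hj (by omega))
  exact key k hk le_rfl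

lemma count_bound {α : Type*} [Fintype α] [DecidableEq α] (s k : ℕ)
    (hk : 1 ≤ k) (H : Finset (Finset α)) :
    (∀ e ∈ H, e.card = s + 1) → ¬ TPaux s k H →
    H.card ≤ (k - 1) *
      ((Finset.univ.powersetCard s).filter (fun S : Finset α => ∃ e ∈ H, S ⊆ e)).card := by
  induction H using Finset.strongInduction with
  | _ H ih =>
    intro hcard hnp
    rcases H.eq_empty_or_nonempty with rfl | hne
    · simp
    by_cases hlow : ∃ S : Finset α, S.card = s ∧ (∃ e ∈ H, S ⊆ e) ∧
        (H.filter (fun e => S ⊆ e)).card ≤ k - 1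
    · obtain ⟨S, hScard, ⟨e0, he0, hSe0⟩, hdle⟩ := hlow
      set H' := H.filter (fun e => ¬ S ⊆ e) with hH'def
      have hsplit : (H.filter (fun e => S ⊆ e)).card + H'.card = H.card :=
        Finset.card_filter_add_card_filter_not _
      have hdpos : 1 ≤ (H.filter (fun e => S ⊆ e)).card :=
        Finset.card_pos.mpr ⟨e0, Finset.mem_filter.mpr ⟨he0, hSe0⟩⟩
      have hssub : H' ⊂ H := by
        refine Finset.ssubset_iff_of_subset (Finset.filter_subset _ _) |>.mpr ?_
        exact ⟨e0, he0, fun h => (Finset.mem_filter.mp h).2 hSe0⟩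
      have hnp' : ¬ TPaux s k H' := by
        intro ⟨w, hw1, hw2⟩
        exact hnp ⟨w, hw1, fun i => Finset.filter_subset _ _ (hw2 i)⟩
      have hrec := ih H' hssub (fun e he => hcard e (Finset.filter_subset _ _ he)) hnp'
      set T := (Finset.univ.powersetCard s).filter (fun S : Finset α => ∃ e ∈ H, S ⊆ e)
        with hTdef
      set T' := (Finset.univ.powersetCard s).filter (fun S : Finset α => ∃ e ∈ H', S ⊆ e)
        with hT'def
      have hST : S ∈ T := by
        rw [hTdef, Finset.mem_filter, Finset.mem_powersetCard]
        exact ⟨⟨Finset.subset_univ S, hScard⟩, e0, he0, hSe0⟩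
      have hT'sub : T' ⊆ T.erase S := by
        intro X hX
        rw [hT'def, Finset.mem_filter] at hX
        obtain ⟨hX1, e, he, hXe⟩ := hX
        rw [Finset.mem_erase]
        constructor
        · rintro rfl
          exact (Finset.mem_filter.mp he).2 hXe
        · rw [hTdef, Finset.mem_filter]
          exact ⟨hX1, e, Finset.filter_subset _ _ he, hXe⟩
      have hTcard : T'.card + 1 ≤ T.card := by
        have h1 := Finset.card_le_card hT'sub
        rw [Finset.card_erase_of_mem hST] at h1
        have h2 : 1 ≤ T.card := Finset.card_pos.mpr ⟨S, hST⟩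
        omega
      obtain ⟨m, hm⟩ : ∃ m, T.card = m + 1 := ⟨T.card - 1, by
        have := Finset.card_pos.mpr ⟨S, hST⟩; omega⟩
      calc H.card = (H.filter (fun e => S ⊆ e)).card + H'.card := hsplit.symm
        _ ≤ (k - 1) + (k - 1) * T'.card := by
            exact Nat.add_le_add hdle hrec
        _ ≤ (k - 1) + (k - 1) * m := by
            have : T'.card ≤ m := by omega
            exact Nat.add_le_add_left (Nat.mul_le_mul_left _ this) _
        _ = (k - 1) * (m + 1) := by ring
        _ = (k - 1) * T.card := by rw [hm]
    · push_neg at hlow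
      exfalso
      apply hnp
      apply tp_greedy s k H hcard ?_ hne hk
      intro S hS hSe
      have := hlow S hS hSe
      omega


/-- A tight path with `k` edges in an `r`-uniform hypergraph `H`: a sequence of
`k + r - 1` distinct vertices such that every `r` consecutive vertices form an edge. -/
def IsTightPath {α : Type*} [DecidableEq α] (r k : ℕ) (H : Finset (Finset α))
    (v : Fin (k + r - 1) → α) : Prop :=
  Function.Injective v ∧
  ∀ i : Fin k,
    (Finset.image (fun j : Fin r =>
      v ⟨i.val + j.val, by have := i.isLt; have := j.isLt; omega⟩) Finset.univ) ∈ H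

theorem erdos_gallai_tight_path_trivial_bound
    {α : Type*} [Fintype α] [DecidableEq α] (n r k : ℕ)
    (hn : Fintype.card α = n) (hr : 2 ≤ r) (hk : 1 ≤ k)
    (H : Finset (Finset α)) (hH : ∀ e ∈ H, e.card = r)
    (hpath : ¬ ∃ v : Fin (k + r - 1) → α, IsTightPath r k H v) :
    H.card ≤ (k - 1) * n.choose (r - 1) := by
  obtain ⟨s, rfl⟩ : ∃ s, r = s + 1 := ⟨r - 1, by omega⟩
  have hs : 1 ≤ s := by omega
  have hnp : ¬ TPaux s k H := by
    rintro ⟨w, hw1, hw2⟩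
    apply hpath
    refine ⟨fun i => w ⟨i.val, by have := i.isLt; omega⟩, ?_, ?_⟩
    · intro a b hab
      have := hw1 hab
      simp [Fin.ext_iff] at this ⊢
      exact this
    · intro i
      have := hw2 i
      convert this using 2
  have hcb := count_bound s k hk H hH hnp
  refine le_trans hcb ?_
  apply Nat.mul_le_mul_left
  refine le_trans (Finset.card_le_card (Finset.filter_subset _ _)) ?_
  rw [Finset.card_powersetCard, Finset.card_univ, hn]
  simp
end

section
/- Let k ≥ 2 and r ≥ k-1. If every (r-1)-uniform hypergraph H' on at most n-1 vertices with no tight k-path satisfies |H'| ≤ (k²/(2(r-1)))·C(n-1, r-2), and H is an r-uniform hypergraph on n vertices with no tight k-path, then |H| ≤ (k²/(2r))·C(n, r-1). -/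
open Finset

section

variable {α : Type*}

def insertAt (f : ℕ → α) (p : ℕ) (v : α) (t : ℕ) : α :=
  if t < p then f t else if t = p then v else f (t - 1)

lemma injOn_insertAt {N p : ℕ} {f : ℕ → α} {v : α} (hf : Set.InjOn f (Set.Iio N))
    (hv : ∀ t < N, f t ≠ v) (hp : p ≤ N) : Set.InjOn (insertAt f p v) (Set.Iio (N + 1)) := by
  intro a ha b hb hab
  simp only [Set.mem_Iio] at ha hb
  simp only [insertAt] at hab
  split_ifs at hab <;>
    first
    | omega
    | exact absurd hab (hv _ (by omega))
    | exact absurd hab.symm (hv _ (by omega))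
    | have := hf (Set.mem_Iio.mpr (by omega)) (Set.mem_Iio.mpr (by omega)) hab; omega

variable [DecidableEq α]

def vertexLink (H : Finset (Finset α)) (v : α) : Finset (Finset α) :=
  {e ∈ H | v ∈ e}.image (·.erase v)

def codegree (H : Finset (Finset α)) (g : Finset α) : ℕ := #{e ∈ H | g ⊆ e}

section VertexLink

variable {H : Finset (Finset α)} {W g : Finset α} {v : α}

lemma mem_vertexLink : g ∈ vertexLink H v ↔ ∃ e ∈ H, v ∈ e ∧ e.erase v = g := by
  simp [vertexLink, and_assoc]

lemma notMem_of_mem_vertexLink (hg : g ∈ vertexLink H v) : v ∉ g := by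
  obtain ⟨e, -, -, rfl⟩ := mem_vertexLink.mp hg
  exact notMem_erase v e

lemma insert_mem_of_mem_vertexLink (hg : g ∈ vertexLink H v) : insert v g ∈ H := by
  obtain ⟨e, he, hv, rfl⟩ := mem_vertexLink.mp hg
  rwa [insert_erase hv]

lemma subset_erase_of_mem_vertexLink {s : ℕ} (hH : ∀ e ∈ H, e ⊆ W ∧ #e = s + 1)
    (hg : g ∈ vertexLink H v) : g ⊆ W.erase v ∧ #g = s := by
  obtain ⟨e, he, hv, rfl⟩ := mem_vertexLink.mp hg
  refine ⟨erase_subset_erase v (hH e he).1, ?_⟩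
  rw [card_erase_of_mem hv, (hH e he).2, Nat.add_sub_cancel]

lemma card_vertexLink : #(vertexLink H v) = #{e ∈ H | v ∈ e} := by
  refine card_image_of_injOn fun e he e' he' hee => ?_
  rw [← insert_erase (mem_filter.mp he).2, ← insert_erase (mem_filter.mp he').2]
  exact congrArg (insert v) hee

lemma sum_card_vertexLink {m : ℕ} (hH : ∀ e ∈ H, e ⊆ W ∧ #e = m) :
    ∑ v ∈ W, #(vertexLink H v) = m * #H := by
  simp_rw [card_vertexLink]
  calc ∑ v ∈ W, #(H.bipartiteAbove (· ∈ ·) v)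
      = ∑ e ∈ H, #(W.bipartiteBelow (· ∈ ·) e) :=
        sum_card_bipartiteAbove_eq_sum_card_bipartiteBelow _
    _ = ∑ _e ∈ H, m := sum_congr rfl fun e he => by
        rw [bipartiteBelow, filter_mem_eq_inter, inter_eq_right.mpr (hH e he).1, (hH e he).2]
    _ = m * #H := by rw [sum_const, smul_eq_mul, mul_comm]

lemma card_filter_mem_vertexLink_le_codegree :
    #{v ∈ W | g ∈ vertexLink H v} ≤ codegree H g := by
  refine card_le_card_of_injOn (insert · g) (fun v hv => ?_) fun v hv v' hv' h => ?_
  · have hv := (mem_filter.mp hv).2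
    exact mem_filter.mpr ⟨insert_mem_of_mem_vertexLink hv, subset_insert v g⟩
  · exact (insert_inj (notMem_of_mem_vertexLink (mem_filter.mp hv).2)).mp h

lemma sum_card_filter_codegree_le {s : ℕ} (hH : ∀ e ∈ H, e ⊆ W ∧ #e = s + 1) (D : ℕ) :
    ∑ v ∈ W, #{g ∈ vertexLink H v | codegree H g ≤ D} ≤ D * (#W).choose s := by
  let R : α → Finset α → Prop := fun v g => g ∈ vertexLink H v ∧ codegree H g ≤ D
  have hfiber (g : Finset α) : #(W.bipartiteBelow R g) ≤ D := by
    by_cases hg : codegree H g ≤ D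
    · refine le_trans (card_le_card fun v hv => ?_)
        ((card_filter_mem_vertexLink_le_codegree (W := W)).trans hg)
      simp only [mem_bipartiteBelow, R, mem_filter] at hv ⊢
      exact ⟨hv.1, hv.2.1⟩
    · simp [bipartiteBelow, R, hg]
  calc ∑ v ∈ W, #{g ∈ vertexLink H v | codegree H g ≤ D}
      ≤ ∑ v ∈ W, #((W.powersetCard s).bipartiteAbove R v) := by
        refine sum_le_sum fun v _ => card_le_card fun g hg => ?_
        have hg := mem_filter.mp hg
        have hgW := subset_erase_of_mem_vertexLink hH hg.1
        exact (mem_bipartiteAbove R).mpr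
          ⟨mem_powersetCard.mpr ⟨hgW.1.trans (erase_subset v W), hgW.2⟩, hg⟩
    _ = ∑ g ∈ W.powersetCard s, #(W.bipartiteBelow R g) :=
        sum_card_bipartiteAbove_eq_sum_card_bipartiteBelow R
    _ ≤ ∑ _g ∈ W.powersetCard s, D := sum_le_sum fun g _ => hfiber g
    _ = D * (#W).choose s := by rw [sum_const, card_powersetCard, smul_eq_mul, mul_comm]

end VertexLink

def seqWindow (f : ℕ → α) (r i : ℕ) : Finset α := (range r).image fun j => f (i + j)

/-- `IsTightPath` for a path read off an `ℕ`-indexed sequence, which keeps the index arithmetic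
out of `Fin`. -/
def IsTightSeq (r k : ℕ) (H : Finset (Finset α)) (f : ℕ → α) : Prop :=
  Set.InjOn f (Set.Iio (k + r - 1)) ∧ ∀ i < k, seqWindow f r i ∈ H

section TightSeq

variable {H : Finset (Finset α)} {f : ℕ → α} {r k : ℕ}

lemma image_univ_fin_eq_seqWindow (f : ℕ → α) (r i : ℕ) :
    (univ : Finset (Fin r)).image (fun j : Fin r => f (i + j)) = seqWindow f r i := by
  ext x
  simp [seqWindow, Fin.exists_iff]

lemma IsTightSeq.isTightPath (hf : IsTightSeq r k H f) :
    IsTightPath r k H (fun t => f t) :=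
  ⟨fun a b hab => Fin.ext (hf.1 a.2 b.2 hab), fun i => by
    simpa only [image_univ_fin_eq_seqWindow] using hf.2 i i.2⟩

lemma IsTightPath.isTightSeq {u : Fin (k + r - 1) → α} (hu : IsTightPath r k H u) (z : α) :
    IsTightSeq r k H (fun t => if ht : t < k + r - 1 then u ⟨t, ht⟩ else z) := by
  refine ⟨fun a ha b hb hab => ?_, fun i hi => ?_⟩
  · simp only [dif_pos (Set.mem_Iio.mp ha), dif_pos (Set.mem_Iio.mp hb)] at hab
    exact congrArg Fin.val (hu.1 hab)
  · rw [← image_univ_fin_eq_seqWindow]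
    convert hu.2 ⟨i, hi⟩ using 2
    ext j
    exact dif_pos (by have := j.2; omega)

lemma IsTightSeq.mono {H' : Finset (Finset α)} (hf : IsTightSeq r k H f) (hH : H ⊆ H') :
    IsTightSeq r k H' f :=
  ⟨hf.1, fun i hi => hH (hf.2 i hi)⟩

lemma apply_mem_seqWindow (f : ℕ → α) {r i t : ℕ} (hit : i ≤ t) (hti : t < i + r) :
    f t ∈ seqWindow f r i :=
  mem_image.mpr ⟨t - i, mem_range.mpr (by omega), by rw [Nat.add_sub_cancel' hit]⟩

end TightSeq

section Extension

variable {H : Finset (Finset α)} {f : ℕ → α} {s j : ℕ} {v : α}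

lemma seqWindow_insertAt_of_le {p i : ℕ} (hi : i ≤ p) (hp : p ≤ i + s) :
    seqWindow (insertAt f p v) (s + 1) i = insert v (seqWindow f s i) := by
  ext x
  simp only [seqWindow, insertAt, mem_image, mem_range, mem_insert]
  constructor
  · rintro ⟨a, ha, rfl⟩
    split_ifs
    · exact Or.inr ⟨a, by omega, rfl⟩
    · exact Or.inl rfl
    · exact Or.inr ⟨a - 1, by omega, by congr 1; omega⟩
  · rintro (rfl | ⟨a, ha, rfl⟩)
    · exact ⟨p - i, by omega, by rw [if_neg (by omega), if_pos (by omega)]⟩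
    · by_cases h : i + a < p
      · exact ⟨a, by omega, if_pos h⟩
      · refine ⟨a + 1, by omega, ?_⟩
        rw [if_neg (by omega), if_neg (by omega), Nat.add_succ_sub_one]

lemma seqWindow_insertAt_of_lt {p i r : ℕ} (hp : p < i) :
    seqWindow (insertAt f p v) r i = seqWindow f r (i - 1) :=
  image_congr fun a _ => by
    simp only [insertAt]
    rw [if_neg (by omega), if_neg (by omega)]
    congr 1
    omega

lemma IsTightSeq.insertAt_vertexLink (hf : IsTightSeq s j (vertexLink H v) f) (hs : 1 ≤ s)
    (hj : 1 ≤ j) (hjs : j ≤ s + 1) : IsTightSeq (s + 1) j H (insertAt f (j - 1) v) := by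
  have hv (t : ℕ) (ht : t < j + s - 1) : f t ≠ v := fun hft =>
    notMem_of_mem_vertexLink (hf.2 (min t (j - 1)) (by omega))
      (hft ▸ apply_mem_seqWindow f (by omega) (by omega))
  refine ⟨?_, fun i hi => ?_⟩
  · rw [show j + (s + 1) - 1 = j + s - 1 + 1 by omega]
    exact injOn_insertAt hf.1 hv (by omega)
  · rw [seqWindow_insertAt_of_le (by omega) (by omega)]
    exact insert_mem_of_mem_vertexLink (hf.2 i hi)

lemma seqWindow_update_add (f : ℕ → α) (i s : ℕ) (z : α) :
    seqWindow (Function.update f (i + s) z) (s + 1) i = insert z (seqWindow f s i) := by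
  rw [seqWindow, range_add_one, image_insert, Function.update_self]
  congr 1
  exact image_congr fun a ha => Function.update_of_ne (by have := mem_range.mp ha; omega) _ _

lemma IsTightSeq.update (hf : IsTightSeq (s + 1) j H f) {z : α}
    (hz : z ∉ (range (j + s)).image f) (hH : insert z (seqWindow f s j) ∈ H) :
    IsTightSeq (s + 1) (j + 1) H (Function.update f (j + s) z) := by
  refine ⟨fun a ha b hb hab => ?_, fun i hi => ?_⟩
  · simp only [Set.mem_Iio] at ha hb
    rcases eq_or_ne a (j + s) with rfl | ha' <;> rcases eq_or_ne b (j + s) with rfl | hb'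
    · rfl
    · rw [Function.update_self, Function.update_of_ne hb'] at hab
      exact absurd (hab ▸ mem_image_of_mem f (mem_range.mpr (by omega))) hz
    · rw [Function.update_self, Function.update_of_ne ha'] at hab
      exact absurd (hab ▸ mem_image_of_mem f (mem_range.mpr (by omega))) hz
    · rw [Function.update_of_ne ha', Function.update_of_ne hb'] at hab
      exact hf.1 (Set.mem_Iio.mpr (by omega)) (Set.mem_Iio.mpr (by omega)) hab
  · rcases (Nat.lt_succ_iff.mp hi).lt_or_eq with hi | rfl
    · convert hf.2 i hi using 1
      exact image_congr fun a ha => Function.update_of_ne (by have := mem_range.mp ha; omega) _ _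
    · rwa [seqWindow_update_add]

end Extension

section Codegree

variable {H : Finset (Finset α)} {f : ℕ → α} {s j : ℕ}

lemma codegree_seqWindow_le (hH : ∀ e ∈ H, #e = s + 1) (hf : IsTightSeq (s + 1) j H f)
    (hmax : ¬ ∃ g, IsTightSeq (s + 1) (j + 1) H g) : codegree H (seqWindow f s j) ≤ j := by
  have hinj : Set.InjOn f (range (j + s)) := fun a ha b hb =>
    hf.1 (Set.mem_Iio.mpr (mem_range.mp ha)) (Set.mem_Iio.mpr (mem_range.mp hb))
  have hP : #((range (j + s)).image f) = j + s := by rw [card_image_of_injOn hinj, card_range]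
  have hF : #(seqWindow f s j) = s := by
    rw [seqWindow, card_image_of_injOn fun a ha b hb h => ?_, card_range]
    have := hinj (mem_range.mpr (by have := mem_range.mp ha; omega))
      (mem_range.mpr (by have := mem_range.mp hb; omega)) h
    omega
  set F := seqWindow f s j
  set P := (range (j + s)).image f
  have hFP : F ⊆ P := image_subset_iff.mpr fun a ha =>
    mem_image_of_mem f (mem_range.mpr (by have := mem_range.mp ha; omega))
  have hedges : {e ∈ H | F ⊆ e} ⊆ (P \ F).image (insert · F) := by
    intro e he
    obtain ⟨he, hFe⟩ := mem_filter.mp he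
    obtain ⟨z, hzF, rfl⟩ := exists_eq_insert_iff.mpr ⟨hFe, by rw [hF, hH _ he]⟩
    have hzP : z ∈ P := by_contra fun hzP => hmax ⟨_, hf.update hzP he⟩
    exact mem_image_of_mem _ (mem_sdiff.mpr ⟨hzP, hzF⟩)
  calc codegree H F ≤ #((P \ F).image (insert · F)) := card_le_card hedges
    _ ≤ #(P \ F) := card_image_le
    _ = j := by rw [card_sdiff_of_subset hFP, hP, hF, Nat.add_sub_cancel]

end Codegree

lemma cast_mul_card_le_sum {H : Finset (Finset α)} {W : Finset α} {m : ℕ}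
    (hH : ∀ e ∈ H, e ⊆ W ∧ #e = m) {b : α → ℝ}
    (hb : ∀ v ∈ W, (#(vertexLink H v) : ℝ) ≤ b v) : (m : ℝ) * #H ≤ ∑ v ∈ W, b v := by
  calc (m : ℝ) * #H = ∑ v ∈ W, (#(vertexLink H v) : ℝ) :=
        mod_cast (sum_card_vertexLink hH).symm
    _ ≤ ∑ v ∈ W, b v := sum_le_sum hb

lemma mul_choose_sub_one_sub_one (m : ℕ) {t : ℕ} (ht : 1 ≤ t) :
    m * (m - 1).choose (t - 1) = t * m.choose t := by
  obtain ⟨t, rfl⟩ := Nat.exists_eq_add_of_le' ht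
  rcases m with _ | m
  · simp
  · simpa [mul_comm] using Nat.add_one_mul_choose_eq m t

section Diagonal

variable {H : Finset (Finset α)}

lemma card_le_one_of_not_exists_isTightSeq_two (hH : ∀ e ∈ H, #e = 1)
    (hmax : ¬ ∃ f, IsTightSeq 1 2 H f) : #H ≤ 1 := by
  by_contra! h
  obtain ⟨e, he, e', he', hne⟩ := one_lt_card.mp h
  obtain ⟨x, rfl⟩ := card_eq_one.mp (hH e he)
  obtain ⟨y, rfl⟩ := card_eq_one.mp (hH e' he')
  have hxy : x ≠ y := fun h => hne (h ▸ rfl)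
  refine hmax ⟨fun t => if t = 0 then x else y, fun a ha b hb hab => ?_, fun i hi => ?_⟩
  · simp only [Set.mem_Iio] at ha hb
    beta_reduce at hab
    split_ifs at hab <;> first | omega | exact absurd hab hxy | exact absurd hab.symm hxy
  · interval_cases i <;> simpa [seqWindow]

lemma not_exists_isTightSeq_heavy_vertexLink {s : ℕ} (hs : 1 ≤ s) (hH : ∀ e ∈ H, #e = s + 1)
    (hmax : ¬ ∃ f, IsTightSeq (s + 1) (s + 2) H f) (v : α) :
    ¬ ∃ f, IsTightSeq s (s + 1) {g ∈ vertexLink H v | s + 1 < codegree H g} f := by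
  rintro ⟨f, hf⟩
  have hpath := (hf.mono (filter_subset _ _)).insertAt_vertexLink hs (by omega) le_rfl
  have hlow := codegree_seqWindow_le hH hpath hmax
  rw [Nat.add_sub_cancel, seqWindow_insertAt_of_lt (i := s + 1) (by omega), Nat.add_sub_cancel]
    at hlow
  have hhigh := (mem_filter.mp (hf.2 s (Nat.lt_succ_self s))).2
  omega

theorem card_le_of_not_exists_isTightSeq_succ {s : ℕ} (hs : 1 ≤ s) (W : Finset α)
    (H : Finset (Finset α)) (hH : ∀ e ∈ H, e ⊆ W ∧ #e = s)
    (hmax : ¬ ∃ f, IsTightSeq s (s + 1) H f) :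
    (#H : ℝ) ≤ ((s : ℝ) + 1) ^ 2 / (2 * s) * (#W).choose (s - 1) := by
  induction s, hs using Nat.le_induction generalizing W H with
  | base =>
    have := card_le_one_of_not_exists_isTightSeq_two (fun e he => (hH e he).2) hmax
    norm_num
    exact_mod_cast this.trans (by norm_num)
  | succ s hs ih =>
    have hdeg (v : α) (hv : v ∈ W) : (#(vertexLink H v) : ℝ) ≤
        ((s : ℝ) + 1) ^ 2 / (2 * s) * (#W - 1).choose (s - 1) +
          #{g ∈ vertexLink H v | codegree H g ≤ s + 1} := by
      have hheavy := ih (W.erase v) {g ∈ vertexLink H v | ¬ codegree H g ≤ s + 1}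
        (fun g hg => subset_erase_of_mem_vertexLink hH (mem_filter.mp hg).1)
        (by simpa only [not_le] using
          not_exists_isTightSeq_heavy_vertexLink hs (fun e he => (hH e he).2) hmax v)
      rw [card_erase_of_mem hv] at hheavy
      rw [← card_filter_add_card_filter_not (p := fun g => codegree H g ≤ s + 1)]
      push_cast
      linarith
    have hsum := cast_mul_card_le_sum hH hdeg
    rw [sum_add_distrib, sum_const, nsmul_eq_mul] at hsum
    have hlight : (∑ v ∈ W, (#{g ∈ vertexLink H v | codegree H g ≤ s + 1} : ℝ)) ≤
        (s + 1) * (#W).choose s := by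
      exact_mod_cast sum_card_filter_codegree_le hH (s + 1)
    have hid : (#W : ℝ) * (#W - 1).choose (s - 1) = s * (#W).choose s := by
      exact_mod_cast mul_choose_sub_one_sub_one #W hs
    have hC : (0 : ℝ) ≤ (#W).choose s := by positivity
    have hs0 : (0 : ℝ) < s := by exact_mod_cast hs
    have hsumHeavy : (#W : ℝ) * (((s : ℝ) + 1) ^ 2 / (2 * s) * (#W - 1).choose (s - 1)) =
        ((s : ℝ) + 1) ^ 2 / 2 * (#W).choose s := by
      rw [mul_left_comm, hid]
      field_simp
    rw [Nat.add_sub_cancel, div_mul_eq_mul_div, le_div_iff₀ (by positivity)]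
    push_cast at hsum ⊢
    -- `(s + 3) (s + 1) ≤ (s + 2) ^ 2` absorbs the light edges
    nlinarith

end Diagonal

end

theorem short_tight_path_induction_step
    {α : Type*} [Fintype α] [DecidableEq α] (n r k : ℕ)
    (hn : Fintype.card α = n) (hk : 2 ≤ k) (hrk : k - 1 ≤ r)
    -- the inductive hypothesis for (r-1)-uniform hypergraphs on at most n-1 vertices
    (hind : ∀ (W : Finset α) (H' : Finset (Finset α)), W.card ≤ n - 1 →
      (∀ e ∈ H', e ⊆ W ∧ e.card = r - 1) →
      (¬ ∃ v : Fin (k + (r - 1) - 1) → α, IsTightPath (r - 1) k H' v) →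
      (H'.card : ℝ) ≤ (k : ℝ) ^ 2 / (2 * ((r : ℝ) - 1)) * ((n - 1).choose (r - 2)))
    (H : Finset (Finset α)) (hH : ∀ e ∈ H, e.card = r)
    (hpath : ¬ ∃ v : Fin (k + r - 1) → α, IsTightPath r k H v) :
    (H.card : ℝ) ≤ (k : ℝ) ^ 2 / (2 * r) * (n.choose (r - 1)) := by
  have hmax : ¬ ∃ f, IsTightSeq r k H f := fun ⟨f, hf⟩ => hpath ⟨_, hf.isTightPath⟩
  have hHW : ∀ e ∈ H, e ⊆ univ ∧ #e = r := fun e he => ⟨subset_univ e, hH e he⟩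
  obtain rfl | hkr : k = r + 1 ∨ k ≤ r := by omega
  · simpa [hn] using card_le_of_not_exists_isTightSeq_succ (by omega) univ H hHW hmax
  obtain ⟨s, rfl⟩ : ∃ s, r = s + 1 := ⟨r - 1, by omega⟩
  have hs : 1 ≤ s := by omega
  have hdeg (v : α) (_ : v ∈ univ) :
      (#(vertexLink H v) : ℝ) ≤ (k : ℝ) ^ 2 / (2 * s) * (n - 1).choose (s - 1) := by
    have hlink := hind (univ.erase v) (vertexLink H v) (by simp [hn])
      (fun g hg => subset_erase_of_mem_vertexLink hHW hg)
      (fun ⟨u, hu⟩ => hmax ⟨_, (hu.isTightSeq v).insertAt_vertexLink hs (by omega) hkr⟩)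
    simpa [show s + 1 - 2 = s - 1 by omega] using hlink
  have hsum := cast_mul_card_le_sum hHW hdeg
  rw [sum_const, card_univ, hn, nsmul_eq_mul, mul_left_comm] at hsum
  have hid : (n : ℝ) * (n - 1).choose (s - 1) = s * n.choose s := by
    exact_mod_cast mul_choose_sub_one_sub_one n hs
  rw [hid] at hsum
  rw [Nat.add_sub_cancel, div_mul_eq_mul_div, le_div_iff₀ (by positivity)]
  have hs0 : (0 : ℝ) < s := by exact_mod_cast hs
  field_simp at hsum
  push_cast at hsum ⊢
  linarith
end

section
/- Let G be a graph on n vertices whose vertex set is cyclically ordered (identified with Z/nZ). If G contains no 'zigzag path' with 2k+1 edges, then G has at most k·n edges. Here a zigzag path with m edges is a path v_0v_1...v_m such that in the cyclic order the vertices appear in the order v_0, v_2, v_4, ..., v_5, v_3, v_1. -/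
/-- A tuple of points of `ZMod n` appears in this cyclic order: it lifts to a strictly
increasing tuple of integers spanning less than one full turn. -/
def InCyclicOrder (n : ℕ) {m : ℕ} (w : Fin m → ZMod n) : Prop :=
  ∃ a : Fin m → ℕ, StrictMono a ∧ (∀ j, ((a j : ℕ) : ZMod n) = w j) ∧
    ∀ j j' : Fin m, a j < a j' + n

/-- A zigzag path with `m` edges in a convex geometric graph `G` on the cyclically
ordered vertex set `ZMod n`: a path `v₀ v₁ … v_m` whose vertices appear in the cyclic
order `v₀, v₂, v₄, …, v₅, v₃, v₁`. -/
def IsZigzagPath {n : ℕ} (G : SimpleGraph (ZMod n)) (m : ℕ)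
    (v : Fin (m + 1) → ZMod n) : Prop :=
  Function.Injective v ∧
  (∀ i : Fin m, G.Adj (v i.castSucc) (v i.succ)) ∧
  InCyclicOrder n (fun j : Fin (m + 1) =>
    v ⟨if 2 * j.val ≤ m then 2 * j.val else 2 * (m - j.val) + 1,
       by have := j.isLt; split_ifs <;> omega⟩)

/-- The zigzag reindexing: position `t` in the path order of the `j`-th element
of the cyclic order `v₀, v₂, v₄, …, v₅, v₃, v₁`. -/
def zigIdx (m t : ℕ) : ℕ := if 2 * t ≤ m then 2 * t else 2 * (m - t) + 1

/-- The total order on path indices induced by the zigzag cyclic order. -/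
def zigLT (t t' : ℕ) : Prop :=
  (t % 2 = 0 ∧ t' % 2 = 0 ∧ t < t') ∨ (t % 2 = 1 ∧ t' % 2 = 1 ∧ t' < t) ∨
  (t % 2 = 0 ∧ t' % 2 = 1)

lemma zigLT_total {t t' : ℕ} (h : t ≠ t') : zigLT t t' ∨ zigLT t' t := by
  unfold zigLT; omega

lemma zigIdx_le {m j : ℕ} (h : j ≤ m) : zigIdx m j ≤ m := by
  unfold zigIdx; split <;> omega

lemma zigLT_zigIdx {m j j' : ℕ} (h : j < j') (h' : j' ≤ m) :
    zigLT (zigIdx m j) (zigIdx m j') := by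
  unfold zigIdx zigLT; split <;> split <;> omega

variable {n : ℕ} [NeZero n] (G : SimpleGraph (ZMod n))

/-- A "zigzag witness": integer lifts of an `m`-edge zigzag path. -/
def ZW (m : ℕ) (y : ℕ → ℕ) : Prop :=
  (∀ i < m, G.Adj ((y i : ℕ) : ZMod n) ((y (i+1) : ℕ) : ZMod n)) ∧
  (∀ t ≤ m, ∀ t' ≤ m, zigLT t t' → y t < y t') ∧
  (∀ t ≤ m, ∀ t' ≤ m, y t < y t' + n)

lemma ZW.mono {m m' : ℕ} {y : ℕ → ℕ} (h : ZW G m y) (hm : m' ≤ m) : ZW G m' y :=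
  ⟨fun i hi => h.1 i (lt_of_lt_of_le hi hm),
   fun t ht t' ht' => h.2.1 t (ht.trans hm) t' (ht'.trans hm),
   fun t ht t' ht' => h.2.2 t (ht.trans hm) t' (ht'.trans hm)⟩

lemma ZW.toZig {m : ℕ} {y : ℕ → ℕ} (h : ZW G m y) :
    IsZigzagPath G m (fun i : Fin (m+1) => ((y i : ℕ) : ZMod n)) := by
  obtain ⟨hadj, hchain, hspan⟩ := h
  refine ⟨?_, ?_, ?_⟩
  · intro i j hij
    by_contra hne
    have hv : (i : ℕ) ≠ (j : ℕ) := fun hc => hne (Fin.ext hc)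
    have hlt : y i < y j ∨ y j < y i := by
      rcases zigLT_total hv with hz | hz
      · exact Or.inl (hchain _ (Nat.lt_succ_iff.mp i.isLt) _ (Nat.lt_succ_iff.mp j.isLt) hz)
      · exact Or.inr (hchain _ (Nat.lt_succ_iff.mp j.isLt) _ (Nat.lt_succ_iff.mp i.isLt) hz)
    -- from equality mod n and span, contradiction
    have hsp1 : y i < y j + n := hspan _ (Nat.lt_succ_iff.mp i.isLt) _ (Nat.lt_succ_iff.mp j.isLt)
    have hsp2 : y j < y i + n := hspan _ (Nat.lt_succ_iff.mp j.isLt) _ (Nat.lt_succ_iff.mp i.isLt)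
    have hmod : y i ≡ y j [MOD n] := (ZMod.natCast_eq_natCast_iff _ _ _).mp hij
    rcases hlt with hl | hl
    · have : n ∣ y j - y i := (Nat.modEq_iff_dvd' hl.le).mp hmod
      have := Nat.le_of_dvd (by omega) this
      omega
    · have : n ∣ y i - y j := (Nat.modEq_iff_dvd' hl.le).mp hmod.symm
      have := Nat.le_of_dvd (by omega) this
      omega
  · intro i
    have := hadj i.val i.isLt
    simpa using this
  · refine ⟨fun j => y (zigIdx m j.val), ?_, ?_, ?_⟩
    · intro j j' hjj
      exact hchain _ (zigIdx_le (Nat.lt_succ_iff.mp j.isLt)) _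
        (zigIdx_le (Nat.lt_succ_iff.mp j'.isLt)) (zigLT_zigIdx hjj (Nat.lt_succ_iff.mp j'.isLt))
    · intro j; rfl
    · intro j j'
      exact hspan _ (zigIdx_le (Nat.lt_succ_iff.mp j.isLt)) _ (zigIdx_le (Nat.lt_succ_iff.mp j'.isLt))
lemma ZW.append {m : ℕ} {y : ℕ → ℕ} (h : ZW G m y) (hm : 1 ≤ m) (c : ℕ)
    (hadj : G.Adj ((y m : ℕ) : ZMod n) ((c : ℕ) : ZMod n))
    (hbet : (m % 2 = 1 ∧ y (m-1) < c ∧ c < y m) ∨ (m % 2 = 0 ∧ y m < c ∧ c < y (m-1))) :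
    ZW G (m+1) (Function.update y (m+1) c) := by
  obtain ⟨hadjo, hchain, hspan⟩ := h
  have hupdlt : ∀ t ≤ m, Function.update y (m+1) c t = y t := by
    intro t ht; exact Function.update_of_ne (by omega) _ _
  have hupds : Function.update y (m+1) c (m+1) = c := Function.update_self _ _ _
  refine ⟨?_, ?_, ?_⟩
  · intro i hi
    rcases Nat.lt_or_ge i m with hlt | hge
    · rw [hupdlt i (by omega), hupdlt (i+1) (by omega)]; exact hadjo i hlt
    · have him : i = m := by omega
      subst him
      rw [hupdlt i le_rfl, hupds]; exact hadj
  · intro t ht t' ht' hz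
    rcases Nat.lt_or_ge t (m+1) with h1 | h1 <;> rcases Nat.lt_or_ge t' (m+1) with h2 | h2
    · rw [hupdlt t (by omega), hupdlt t' (by omega)]
      exact hchain t (by omega) t' (by omega) hz
    · -- t' = m+1 : show y t < c
      have ht'e : t' = m + 1 := by omega
      subst ht'e
      rw [hupdlt t (by omega), hupds]
      rcases hbet with ⟨hpar, hlo, hhi⟩ | ⟨hpar, hlo, hhi⟩
      · -- m odd, m+1 even; zigLT t (m+1) forces t even, t ≤ m-1
        have hte : t % 2 = 0 ∧ t ≤ m - 1 := by unfold zigLT at hz; omega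
        rcases Nat.lt_or_ge t (m-1) with h3 | h3
        · have : y t < y (m-1) := hchain t (by omega) (m-1) (by omega)
            (by unfold zigLT; omega)
          omega
        · have : t = m - 1 := by omega
          rw [this]; omega
      · -- m even, m+1 odd; zigLT t (m+1) forces t even, t ≤ m
        have hte : t % 2 = 0 := by unfold zigLT at hz; omega
        rcases Nat.lt_or_ge t m with h3 | h3
        · have : y t < y m := hchain t (by omega) m (by omega) (by unfold zigLT; omega)
          omega
        · have : t = m := by omega
          rw [this]; omega
    · -- t = m+1 : show c < y t'
      have hte : t = m + 1 := by omega
      subst hte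
      rw [hupdlt t' (by omega), hupds]
      rcases hbet with ⟨hpar, hlo, hhi⟩ | ⟨hpar, hlo, hhi⟩
      · -- m odd, m+1 even: zigLT (m+1) t' forces t' odd, t' ≤ m
        have hte : t' % 2 = 1 := by unfold zigLT at hz; omega
        rcases Nat.lt_or_ge t' m with h3 | h3
        · have : y m < y t' := hchain m (by omega) t' (by omega) (by unfold zigLT; omega)
          omega
        · have : t' = m := by omega
          rw [this]; omega
      · -- m even, m+1 odd: zigLT (m+1) t' forces t' odd, t' ≤ m-1
        have hte : t' % 2 = 1 ∧ t' ≤ m - 1 := by unfold zigLT at hz; omega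
        rcases Nat.lt_or_ge t' (m-1) with h3 | h3
        · have : y (m-1) < y t' := hchain (m-1) (by omega) t' (by omega)
            (by unfold zigLT; omega)
          omega
        · have : t' = m - 1 := by omega
          rw [this]; omega
    · unfold zigLT at hz; omega
  · intro t ht t' ht'
    have hyl : ∀ s ≤ m, y s < c + n ∧ c < y s + n := by
      intro s hs
      rcases hbet with ⟨hpar, hlo, hhi⟩ | ⟨hpar, hlo, hhi⟩
      · have h1 := hspan s hs (m-1) (by omega)
        have h2 := hspan m (by omega) s hs
        omega
      · have h1 := hspan s hs m (by omega)
        have h2 := hspan (m-1) (by omega) s hs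
        omega
    have hn : 1 ≤ n := Nat.one_le_iff_ne_zero.mpr (NeZero.ne n)
    rcases Nat.lt_or_ge t (m+1) with h1 | h1 <;> rcases Nat.lt_or_ge t' (m+1) with h2 | h2
    · rw [hupdlt t (by omega), hupdlt t' (by omega)]
      exact hspan t (by omega) t' (by omega)
    · have : t' = m+1 := by omega
      subst this
      rw [hupdlt t (by omega), hupds]
      exact (hyl t (by omega)).1
    · have : t = m+1 := by omega
      subst this
      rw [hupdlt t' (by omega), hupds]
      exact (hyl t' (by omega)).2
    · have h3 : t = m+1 := by omega
      have h4 : t' = m+1 := by omega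
      subst h3; subst h4
      rw [hupds]; omega
variable [DecidableRel G.Adj]

/-- Longest-zigzag value ending at the arc with left endpoint `a` and right endpoint
`a - d` (complement length `d`); `true` = ending at the right endpoint (odd values),
`false` = ending at the left endpoint (even values, `0` = unreachable). -/
def zz : ℕ → Bool → ZMod n → ℕ
  | d, true, a =>
      1 + (Finset.Ico 1 d).attach.sup (fun d' =>
        if G.Adj a (a - (d'.1 : ℕ)) then zz d'.1 false a else 0)
  | d, false, a =>
      (Finset.Ico 1 d).attach.sup (fun d' =>
        if G.Adj ((a - (d : ℕ)) + (d'.1 : ℕ)) (a - (d : ℕ)) then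
          zz d'.1 true ((a - (d : ℕ)) + (d'.1 : ℕ)) + 1 else 0)
  termination_by d _ _ => d
  decreasing_by
  · have := d'.2; rw [Finset.mem_Ico] at this; omega
  · have := d'.2; rw [Finset.mem_Ico] at this; omega

lemma zz_true_def (d : ℕ) (a : ZMod n) :
    zz G d true a = 1 + (Finset.Ico 1 d).attach.sup (fun d' =>
      if G.Adj a (a - (d'.1 : ℕ)) then zz G d'.1 false a else 0) := by
  rw [zz]

lemma zz_false_def (d : ℕ) (a : ZMod n) :
    zz G d false a = (Finset.Ico 1 d).attach.sup (fun d' =>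
      if G.Adj ((a - (d : ℕ)) + (d'.1 : ℕ)) (a - (d : ℕ)) then
        zz G d'.1 true ((a - (d : ℕ)) + (d'.1 : ℕ)) + 1 else 0) := by
  rw [zz]

lemma one_le_zz_true (d : ℕ) (a : ZMod n) : 1 ≤ zz G d true a := by
  rw [zz_true_def]; omega

lemma sup_even {α : Type*} (s : Finset α) (f : α → ℕ) (h : ∀ x ∈ s, f x % 2 = 0) :
    s.sup f % 2 = 0 := by
  rcases s.eq_empty_or_nonempty with rfl | hne
  · simp
  · obtain ⟨b, hb, he⟩ := Finset.exists_mem_eq_sup s hne f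
    rw [he]; exact h b hb

lemma zz_parity : ∀ d : ℕ, ∀ a : ZMod n, zz G d true a % 2 = 1 ∧ zz G d false a % 2 = 0 := by
  intro d
  induction d using Nat.strong_induction_on with
  | _ d IH =>
    intro a
    constructor
    · rw [zz_true_def]
      have : ((Finset.Ico 1 d).attach.sup (fun d' =>
          if G.Adj a (a - (d'.1 : ℕ)) then zz G d'.1 false a else 0)) % 2 = 0 := by
        apply sup_even
        intro x _
        split
        · have hx := x.2; rw [Finset.mem_Ico] at hx
          exact (IH x.1 (by omega) a).2
        · rfl
      omega
    · rw [zz_false_def]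
      apply sup_even
      intro x _
      split
      · have hx := x.2; rw [Finset.mem_Ico] at hx
        have := (IH x.1 (by omega) ((a - (d : ℕ)) + (x.1 : ℕ))).1
        omega
      · rfl

/-- Column chain inequality: arcs sharing left endpoint `a`. -/
lemma zz_col_chain {d d' : ℕ} (a : ZMod n) (h1 : 1 ≤ d') (h2 : d' < d)
    (hadj : G.Adj a (a - (d' : ℕ))) : zz G d' false a + 1 ≤ zz G d true a := by
  rw [zz_true_def]
  have hmem : (⟨d', Finset.mem_Ico.mpr ⟨h1, h2⟩⟩ : {x // x ∈ Finset.Ico 1 d}) ∈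
      (Finset.Ico 1 d).attach := Finset.mem_attach _ _
  have := Finset.le_sup (f := fun d'' =>
    if G.Adj a (a - (d''.1 : ℕ)) then zz G d''.1 false a else 0) hmem
  dsimp only at this; rw [if_pos hadj] at this
  omega

/-- Row chain inequality: arcs sharing right endpoint `a - d`. -/
lemma zz_row_chain {d d' : ℕ} (a : ZMod n) (h1 : 1 ≤ d') (h2 : d' < d)
    (hadj : G.Adj ((a - (d : ℕ)) + (d' : ℕ)) (a - (d : ℕ))) :
    zz G d' true ((a - (d : ℕ)) + (d' : ℕ)) + 1 ≤ zz G d false a := by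
  rw [zz_false_def]
  have hmem : (⟨d', Finset.mem_Ico.mpr ⟨h1, h2⟩⟩ : {x // x ∈ Finset.Ico 1 d}) ∈
      (Finset.Ico 1 d).attach := Finset.mem_attach _ _
  have := Finset.le_sup (f := fun d'' =>
    if G.Adj ((a - (d : ℕ)) + (d''.1 : ℕ)) (a - (d : ℕ)) then
      zz G d''.1 true ((a - (d : ℕ)) + (d''.1 : ℕ)) + 1 else 0) hmem
  dsimp only at this; rw [if_pos hadj] at this
  omega
lemma cast_nsub (d : ℕ) (hd : d ≤ n) : ((n - d : ℕ) : ZMod n) = - (d : ZMod n) := by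
  rw [Nat.cast_sub hd, ZMod.natCast_self]; ring

lemma val_cast (a : ZMod n) : ((a.val : ℕ) : ZMod n) = a := by
  rw [ZMod.natCast_val, ZMod.cast_id]

lemma realize (d : ℕ) : 1 ≤ d → d < n → ∀ a : ZMod n, G.Adj a (a - (d : ℕ)) →
    ((∃ y : ℕ → ℕ, ∃ s : ℕ, ZW G (zz G d true a) y ∧ (s : ZMod n) = a ∧
      y (zz G d true a - 1) = s ∧ y (zz G d true a) = s + (n - d)) ∧
     (2 ≤ zz G d false a → ∃ y : ℕ → ℕ, ∃ s : ℕ, ZW G (zz G d false a) y ∧ (s : ZMod n) = a ∧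
      y (zz G d false a - 1) = s + (n - d) ∧ y (zz G d false a) = s)) := by
  induction d using Nat.strong_induction_on with
  | _ d IH =>
  intro hd1 hdn a hadj
  constructor
  · -- ending at the right endpoint
    rcases Nat.eq_zero_or_pos ((Finset.Ico 1 d).attach.sup (fun d' =>
        if G.Adj a (a - (d'.1 : ℕ)) then zz G d'.1 false a else 0)) with h0 | hpos
    · -- base case: a single edge
      have hm : zz G d true a = 1 := by rw [zz_true_def, h0]
      refine ⟨fun t => if t = 0 then a.val else a.val + (n - d), a.val, ?_, val_cast a, ?_, ?_⟩
      · rw [hm]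
        refine ⟨?_, ?_, ?_⟩
        · intro i hi
          have hi0 : i = 0 := by omega
          subst hi0
          simp only [reduceIte, show (0:ℕ)+1 = 1 from rfl, if_neg (by omega : (1:ℕ) ≠ 0)]
          have h1 : ((a.val : ℕ) : ZMod n) = a := val_cast a
          have h2 : ((a.val + (n - d) : ℕ) : ZMod n) = a - (d : ℕ) := by
            push_cast
            rw [val_cast, cast_nsub _ (le_of_lt hdn)]
            ring
          rw [h1, h2]; exact hadj
        · intro t ht t' ht' hz
          interval_cases t <;> interval_cases t' <;> unfold zigLT at hz <;> simp_all <;> omega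
        · intro t ht t' ht'
          have hn1 : 1 ≤ n := by omega
          interval_cases t <;> interval_cases t' <;> simp_all <;> omega
      · rw [hm]; rfl
      · rw [hm]; rfl
    · -- inductive step
      have hne : ((Finset.Ico 1 d).attach).Nonempty := by
        by_contra hcon
        rw [Finset.not_nonempty_iff_eq_empty] at hcon
        rw [hcon, Finset.sup_empty] at hpos
        simp at hpos
      obtain ⟨d', _, hsup⟩ := Finset.exists_mem_eq_sup _ hne (fun d' =>
        if G.Adj a (a - (d'.1 : ℕ)) then zz G d'.1 false a else 0)
      have hd'mem := d'.2
      rw [Finset.mem_Ico] at hd'mem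
      by_cases hAdj' : G.Adj a (a - (d'.1 : ℕ))
      swap
      · rw [if_neg hAdj'] at hsup; omega
      rw [if_pos hAdj'] at hsup
      set X := zz G d'.1 false a with hXdef
      have hXpar : X % 2 = 0 := (zz_parity G d'.1 a).2
      have h2X : 2 ≤ X := by omega
      obtain ⟨y', s, hzw', hs, he1, he2⟩ :=
        (IH d'.1 (by omega) (by omega) (by omega) a hAdj').2 h2X
      have hm : zz G d true a = X + 1 := by
        rw [zz_true_def, hsup]; omega
      have happ : ZW G (X + 1) (Function.update y' (X+1) (s + (n - d))) := by
        apply ZW.append G hzw' (by omega)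
        · rw [he2, hs]
          have : ((s + (n - d) : ℕ) : ZMod n) = a - (d : ℕ) := by
            push_cast
            rw [hs, cast_nsub _ (le_of_lt hdn)]
            ring
          rw [this]; exact hadj
        · refine Or.inr ⟨hXpar, ?_, ?_⟩
          · rw [he2]; omega
          · rw [he1]; omega
      refine ⟨Function.update y' (X+1) (s + (n - d)), s, ?_, hs, ?_, ?_⟩
      · rw [hm]; exact happ
      · rw [hm]
        rw [Function.update_of_ne (by omega)]
        have hxx : X + 1 - 1 = X := by omega
        rw [hxx]; exact he2
      · rw [hm, Function.update_self]
  · -- ending at the left endpoint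
    intro h2
    have hpos : 0 < zz G d false a := by omega
    rw [zz_false_def] at hpos
    have hne : ((Finset.Ico 1 d).attach).Nonempty := by
      by_contra hcon
      rw [Finset.not_nonempty_iff_eq_empty] at hcon
      rw [hcon, Finset.sup_empty] at hpos
      simp at hpos
    obtain ⟨d', _, hsup⟩ := Finset.exists_mem_eq_sup _ hne (fun d' =>
      if G.Adj ((a - (d : ℕ)) + (d'.1 : ℕ)) (a - (d : ℕ)) then
        zz G d'.1 true ((a - (d : ℕ)) + (d'.1 : ℕ)) + 1 else 0)
    have hd'mem := d'.2
    rw [Finset.mem_Ico] at hd'mem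
    by_cases hAdjP : G.Adj ((a - (d : ℕ)) + (d'.1 : ℕ)) (a - (d : ℕ))
    swap
    · rw [if_neg hAdjP] at hsup; omega
    rw [if_pos hAdjP] at hsup
    set β := (a - (d : ℕ)) + ((d'.1 : ℕ) : ZMod n) with hβdef
    set X := zz G d'.1 true β with hXdef
    have hXpar : X % 2 = 1 := (zz_parity G d'.1 β).1
    have hadjβ : G.Adj β (β - (d'.1 : ℕ)) := by
      have hrw : β - ((d'.1 : ℕ) : ZMod n) = a - (d : ℕ) := by rw [hβdef]; ring
      rw [hrw]; exact hAdjP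
    obtain ⟨y', s, hzw', hs, he1, he2⟩ :=
      (IH d'.1 (by omega) (by omega) (by omega) β hadjβ).1
    have hm : zz G d false a = X + 1 := by
      rw [zz_false_def, hsup]
    have hcastc : ((s + (d - d'.1) : ℕ) : ZMod n) = a := by
      push_cast [Nat.cast_sub (by omega : d'.1 ≤ d)]
      rw [hs, hβdef]
      ring
    have happ : ZW G (X + 1) (Function.update y' (X+1) (s + (d - d'.1))) := by
      apply ZW.append G hzw' (by omega)
      · rw [he2]
        have hy : ((s + (n - d'.1) : ℕ) : ZMod n) = a - (d : ℕ) := by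
          push_cast [cast_nsub _ (by omega : d'.1 ≤ n)]
          rw [hs, hβdef]
          ring
        rw [hy, hcastc]
        exact hadj.symm
      · refine Or.inl ⟨hXpar, ?_, ?_⟩
        · rw [he1]; omega
        · rw [he2]; omega
    refine ⟨Function.update y' (X+1) (s + (d - d'.1)), s + (d - d'.1), ?_, hcastc, ?_, ?_⟩
    · rw [hm]; exact happ
    · rw [hm]
      rw [Function.update_of_ne (by omega)]
      have hxx : X + 1 - 1 = X := by omega
      rw [hxx, he2]
      omega
    · rw [hm, Function.update_self]
lemma zz_le {k : ℕ} (h : ¬ ∃ v : Fin (2*k+1+1) → ZMod n, IsZigzagPath G (2*k+1) v)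
    {d : ℕ} (hd1 : 1 ≤ d) (hdn : d < n) {a : ZMod n} (hadj : G.Adj a (a - (d : ℕ)))
    (dir : Bool) : zz G d dir a ≤ 2*k := by
  by_contra hcon
  push_neg at hcon
  have hex : ∃ y : ℕ → ℕ, ZW G (2*k+1) y := by
    cases dir with
    | true =>
      obtain ⟨y, s, hzw, -, -, -⟩ := (realize G d hd1 hdn a hadj).1
      exact ⟨y, hzw.mono G (by omega)⟩
    | false =>
      have hpar : zz G d false a % 2 = 0 := (zz_parity G d a).2
      obtain ⟨y, s, hzw, -, -, -⟩ := (realize G d hd1 hdn a hadj).2 (by omega)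
      exact ⟨y, hzw.mono G (by omega)⟩
  obtain ⟨y, hzw⟩ := hex
  exact h ⟨_, hzw.toZig G⟩

lemma chain_le (k : ℕ) (S : Finset ℕ) (f : ℕ → ℕ)
    (h1 : ∀ d ∈ S, 1 ≤ f d) (hub : ∀ d ∈ S, f d ≤ 2*k)
    (hstep : ∀ d' ∈ S, ∀ d ∈ S, d' < d → f d' + 2 ≤ f d) : S.card ≤ k := by
  have hinj : Set.InjOn (fun d => (f d - 1)/2) S := by
    intro x hx y hy hxy
    by_contra hne
    rcases Nat.lt_or_ge x y with hlt | hge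
    · have := hstep x hx y hy hlt
      have := h1 x hx
      simp only at hxy
      omega
    · have hlt : y < x := by omega
      have := hstep y hy x hx hlt
      have := h1 y hy
      simp only at hxy
      omega
  calc S.card = (S.image fun d => (f d - 1)/2).card :=
        (Finset.card_image_of_injOn hinj).symm
    _ ≤ (Finset.range k).card := by
        apply Finset.card_le_card
        intro x hx
        rw [Finset.mem_image] at hx
        obtain ⟨d, hd, rfl⟩ := hx
        rw [Finset.mem_range]
        have := h1 d hd
        have := hub d hd
        omega
    _ = k := Finset.card_range k
theorem perles_odd_zigzag' {k : ℕ}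
    (h : ¬ ∃ v : Fin (2 * k + 1 + 1) → ZMod n, IsZigzagPath G (2 * k + 1) v) :
    G.edgeFinset.card ≤ k * n := by
  classical
  set A := (Finset.univ ×ˢ Finset.Ico 1 n).filter
      (fun p : ZMod n × ℕ => G.Adj p.1 (p.1 - (p.2 : ℕ))) with hAdef
  have hAmem : ∀ p : ZMod n × ℕ, p ∈ A ↔ (1 ≤ p.2 ∧ p.2 < n ∧ G.Adj p.1 (p.1 - (p.2 : ℕ))) := by
    intro p
    rw [hAdef, Finset.mem_filter, Finset.mem_product, Finset.mem_Ico]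
    simp only [Finset.mem_univ, true_and]
    tauto
  -- |A| = 2 |E|
  have hcard : A.card = 2 * G.edgeFinset.card := by
    rw [← SimpleGraph.sum_degrees_eq_twice_card_edges]
    rw [Finset.card_eq_sum_card_fiberwise (f := Prod.fst) (t := Finset.univ)
      (fun x _ => Finset.mem_univ _)]
    apply Finset.sum_congr rfl
    intro a _
    rw [← SimpleGraph.card_neighborFinset_eq_degree]
    apply Finset.card_bij (fun p _ => p.1 - ((p.2 : ℕ) : ZMod n))
    · intro p hp
      rw [Finset.mem_filter] at hp
      obtain ⟨hpA, hpa⟩ := hp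
      rw [hAmem] at hpA
      rw [SimpleGraph.mem_neighborFinset, ← hpa]
      exact hpA.2.2
    · intro p hp q hq hpq
      rw [Finset.mem_filter] at hp hq
      obtain ⟨hpA, hpa⟩ := hp
      obtain ⟨hqA, hqa⟩ := hq
      rw [hAmem] at hpA hqA
      have h2 : ((p.2 : ℕ) : ZMod n) = ((q.2 : ℕ) : ZMod n) := by
        have : p.1 = q.1 := hpa.trans hqa.symm
        rw [this] at hpq
        have := sub_right_injective hpq
        exact this
      have : p.2 = q.2 := by
        have hv := congrArg ZMod.val h2
        rwa [ZMod.val_cast_of_lt (by omega), ZMod.val_cast_of_lt (by omega)] at hv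
      exact Prod.ext (hpa.trans hqa.symm) this
    · intro b hb
      rw [SimpleGraph.mem_neighborFinset] at hb
      have hne : a - b ≠ 0 := sub_ne_zero_of_ne (G.ne_of_adj hb)
      have hval1 : 1 ≤ (a - b).val := by
        rcases Nat.eq_zero_or_pos (a - b).val with h0 | h1
        · exact absurd ((ZMod.val_eq_zero _).mp h0) hne
        · exact h1
      have hvcast : (((a - b).val : ℕ) : ZMod n) = a - b := val_cast _
      refine ⟨(a, (a - b).val), ?_, ?_⟩
      · rw [Finset.mem_filter, hAmem]
        refine ⟨⟨hval1, ZMod.val_lt _, ?_⟩, rfl⟩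
        simp only
        rw [hvcast]
        simpa using hb
      · simp only
        rw [hvcast]
        ring
  -- row part
  have hrow : (A.filter fun p => zz G p.2 false p.1 < zz G p.2 true p.1).card ≤ k * n := by
    rw [Finset.card_eq_sum_card_fiberwise
      (f := fun p : ZMod n × ℕ => p.1 - ((p.2 : ℕ) : ZMod n)) (t := Finset.univ)
      (fun x _ => Finset.mem_univ _)]
    calc _ ≤ ∑ _b : ZMod n, k := by
          apply Finset.sum_le_sum
          intro b _
          set T := ((A.filter fun p => zz G p.2 false p.1 < zz G p.2 true p.1).filter
            fun p => p.1 - ((p.2 : ℕ) : ZMod n) = b) with hTdef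
          have hTmem : ∀ p : ZMod n × ℕ, p ∈ T →
              1 ≤ p.2 ∧ p.2 < n ∧ G.Adj p.1 (p.1 - (p.2 : ℕ)) ∧
              zz G p.2 false p.1 < zz G p.2 true p.1 ∧ p.1 = b + (p.2 : ℕ) := by
            intro p hp
            rw [hTdef, Finset.mem_filter, Finset.mem_filter, hAmem] at hp
            refine ⟨hp.1.1.1, hp.1.1.2.1, hp.1.1.2.2, hp.1.2, ?_⟩
            have := hp.2
            rw [sub_eq_iff_eq_add] at this
            exact this
          have himg : T.card = (T.image Prod.snd).card := by
            symm
            apply Finset.card_image_of_injOn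
            intro p hp q hq hpq
            have h1 := (hTmem p hp).2.2.2.2
            have h2 := (hTmem q hq).2.2.2.2
            refine Prod.ext ?_ hpq
            rw [h1, h2, hpq]
          rw [himg]
          apply chain_le k _ (fun d => zz G d true (b + ((d : ℕ) : ZMod n)))
          · intro d hd
            exact one_le_zz_true G d _
          · intro d hd
            rw [Finset.mem_image] at hd
            obtain ⟨p, hp, rfl⟩ := hd
            obtain ⟨hp1, hp2, hp3, hp4, hp5⟩ := hTmem p hp
            rw [← hp5]
            exact zz_le G h hp1 hp2 hp3 true
          · intro d' hd' d hd hlt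
            rw [Finset.mem_image] at hd hd'
            obtain ⟨p, hp, rfl⟩ := hd
            obtain ⟨q, hq, rfl⟩ := hd'
            obtain ⟨hp1, hp2, hp3, hp4, hp5⟩ := hTmem p hp
            obtain ⟨hq1, hq2, hq3, hq4, hq5⟩ := hTmem q hq
            -- row chain: zz G q.2 true (b + q.2) + 1 ≤ zz G p.2 false (b + p.2)
            have hrw : (b + ((p.2 : ℕ) : ZMod n)) - ((p.2 : ℕ) : ZMod n) = b := by ring
            have hrw2 : (b + ((q.2 : ℕ) : ZMod n)) - ((q.2 : ℕ) : ZMod n) = b := by ring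
            rw [hp5] at hp4
            rw [hq5] at hq3
            rw [hrw2] at hq3
            have hchain := zz_row_chain G (a := b + ((p.2 : ℕ) : ZMod n))
              (d := p.2) (d' := q.2) hq1 hlt ?_
            · rw [hrw] at hchain
              omega
            · rw [hrw]
              exact hq3
      _ = k * n := by
          rw [Finset.sum_const, Finset.card_univ, ZMod.card, smul_eq_mul, mul_comm]
  -- column part
  have hcol : (A.filter fun p => ¬ (zz G p.2 false p.1 < zz G p.2 true p.1)).card ≤ k * n := by
    rw [Finset.card_eq_sum_card_fiberwise
      (f := fun p : ZMod n × ℕ => p.1) (t := Finset.univ)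
      (fun x _ => Finset.mem_univ _)]
    calc _ ≤ ∑ _b : ZMod n, k := by
          apply Finset.sum_le_sum
          intro b _
          set T := ((A.filter fun p => ¬ (zz G p.2 false p.1 < zz G p.2 true p.1)).filter
            fun p => p.1 = b) with hTdef
          have hTmem : ∀ p : ZMod n × ℕ, p ∈ T →
              1 ≤ p.2 ∧ p.2 < n ∧ G.Adj p.1 (p.1 - (p.2 : ℕ)) ∧
              ¬ (zz G p.2 false p.1 < zz G p.2 true p.1) ∧ p.1 = b := by
            intro p hp
            rw [hTdef, Finset.mem_filter, Finset.mem_filter, hAmem] at hp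
            exact ⟨hp.1.1.1, hp.1.1.2.1, hp.1.1.2.2, hp.1.2, hp.2⟩
          have himg : T.card = (T.image Prod.snd).card := by
            symm
            apply Finset.card_image_of_injOn
            intro p hp q hq hpq
            have h1 := (hTmem p hp).2.2.2.2
            have h2 := (hTmem q hq).2.2.2.2
            exact Prod.ext (h1.trans h2.symm) hpq
          rw [himg]
          apply chain_le k _ (fun d => zz G d false b)
          · intro d hd
            rw [Finset.mem_image] at hd
            obtain ⟨p, hp, rfl⟩ := hd
            obtain ⟨hp1, hp2, hp3, hp4, hp5⟩ := hTmem p hp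
            have := one_le_zz_true G p.2 b
            rw [hp5] at hp4

            omega
          · intro d hd
            rw [Finset.mem_image] at hd
            obtain ⟨p, hp, rfl⟩ := hd
            obtain ⟨hp1, hp2, hp3, hp4, hp5⟩ := hTmem p hp
            rw [← hp5]
            exact zz_le G h hp1 hp2 hp3 false
          · intro d' hd' d hd hlt
            rw [Finset.mem_image] at hd hd'
            obtain ⟨p, hp, rfl⟩ := hd
            obtain ⟨q, hq, rfl⟩ := hd'
            obtain ⟨hp1, hp2, hp3, hp4, hp5⟩ := hTmem p hp
            obtain ⟨hq1, hq2, hq3, hq4, hq5⟩ := hTmem q hq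
            rw [hq5] at hq3
            have hchain := zz_col_chain G (a := b) (d := p.2) (d' := q.2) hq1 hlt hq3
            have hpar1 := (zz_parity G p.2 b).1
            have hpar2 := (zz_parity G p.2 b).2
            rw [hp5] at hp4

            omega
      _ = k * n := by
          rw [Finset.sum_const, Finset.card_univ, ZMod.card, smul_eq_mul, mul_comm]
  have hsplit := Finset.card_filter_add_card_filter_not
    (s := A) (p := fun p => zz G p.2 false p.1 < zz G p.2 true p.1)
  omega

theorem perles_odd_zigzag {n : ℕ} [NeZero n] (k : ℕ)
    (G : SimpleGraph (ZMod n)) [DecidableRel G.Adj]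
    (h : ¬ ∃ v : Fin (2 * k + 1 + 1) → ZMod n, IsZigzagPath G (2 * k + 1) v) :
    G.edgeFinset.card ≤ k * n :=
  perles_odd_zigzag' G h
end
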